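/- Let S be the 6×6 matrix S = -(1/√13)·M where M has entries built from ζ = exp(2πi/13) as in the six-dimensional representation of SL(2,13) (row 1: ζ¹²-ζ, ζ¹⁰-ζ³, ζ⁴-ζ⁹, ζ⁵-ζ⁸, ζ²-ζ¹¹, ζ⁶-ζ⁷; remaining rows obtained by the stated symmetric pattern), and T = diag(ζ⁷, ζ¹¹, ζ⁸, ζ⁶, ζ², ζ⁵). Then S² = -I and T¹³ = I. -/
import Mathlib


noncomputable def zeta13 : ℂ := Complex.exp (2 * Real.pi * Complex.I / 13)

noncomputable def Smat : Matrix (Fin 6) (Fin 6) ℂ :=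
  (-(1 / (Real.sqrt 13 : ℂ))) •
    Matrix.of ![
      ![zeta13^12 - zeta13,   zeta13^10 - zeta13^3, zeta13^4 - zeta13^9,
        zeta13^5 - zeta13^8,  zeta13^2 - zeta13^11, zeta13^6 - zeta13^7],
      ![zeta13^10 - zeta13^3, zeta13^4 - zeta13^9,  zeta13^12 - zeta13,
        zeta13^2 - zeta13^11, zeta13^6 - zeta13^7,  zeta13^5 - zeta13^8],
      ![zeta13^4 - zeta13^9,  zeta13^12 - zeta13,   zeta13^10 - zeta13^3,
        zeta13^6 - zeta13^7,  zeta13^5 - zeta13^8,  zeta13^2 - zeta13^11],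
      ![zeta13^5 - zeta13^8,  zeta13^2 - zeta13^11, zeta13^6 - zeta13^7,
        zeta13 - zeta13^12,   zeta13^3 - zeta13^10, zeta13^9 - zeta13^4],
      ![zeta13^2 - zeta13^11, zeta13^6 - zeta13^7,  zeta13^5 - zeta13^8,
        zeta13^3 - zeta13^10, zeta13^9 - zeta13^4,  zeta13 - zeta13^12],
      ![zeta13^6 - zeta13^7,  zeta13^5 - zeta13^8,  zeta13^2 - zeta13^11,
        zeta13^9 - zeta13^4,  zeta13 - zeta13^12,   zeta13^3 - zeta13^10]]

noncomputable def Tmat : Matrix (Fin 6) (Fin 6) ℂ :=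
  Matrix.diagonal ![zeta13^7, zeta13^11, zeta13^8, zeta13^6, zeta13^2, zeta13^5]

noncomputable def Mzeta : Matrix (Fin 6) (Fin 6) ℂ :=
  Matrix.of ![
      ![zeta13^12 - zeta13,   zeta13^10 - zeta13^3, zeta13^4 - zeta13^9,
        zeta13^5 - zeta13^8,  zeta13^2 - zeta13^11, zeta13^6 - zeta13^7],
      ![zeta13^10 - zeta13^3, zeta13^4 - zeta13^9,  zeta13^12 - zeta13,
        zeta13^2 - zeta13^11, zeta13^6 - zeta13^7,  zeta13^5 - zeta13^8],
      ![zeta13^4 - zeta13^9,  zeta13^12 - zeta13,   zeta13^10 - zeta13^3,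
        zeta13^6 - zeta13^7,  zeta13^5 - zeta13^8,  zeta13^2 - zeta13^11],
      ![zeta13^5 - zeta13^8,  zeta13^2 - zeta13^11, zeta13^6 - zeta13^7,
        zeta13 - zeta13^12,   zeta13^3 - zeta13^10, zeta13^9 - zeta13^4],
      ![zeta13^2 - zeta13^11, zeta13^6 - zeta13^7,  zeta13^5 - zeta13^8,
        zeta13^3 - zeta13^10, zeta13^9 - zeta13^4,  zeta13 - zeta13^12],
      ![zeta13^6 - zeta13^7,  zeta13^5 - zeta13^8,  zeta13^2 - zeta13^11,
        zeta13^9 - zeta13^4,  zeta13 - zeta13^12,   zeta13^3 - zeta13^10]]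

lemma cons_val_five {α : Type*} (x : α) (u : Fin 5 → α) : Matrix.vecCons x u 5 = u 4 := rfl

lemma zeta13_prim : IsPrimitiveRoot zeta13 13 := by
  have h := Complex.isPrimitiveRoot_exp 13 (by norm_num)
  simpa [zeta13] using h

lemma zeta13_pow : zeta13 ^ 13 = 1 := zeta13_prim.pow_eq_one

lemma zeta13_sum : 1 + zeta13 + zeta13^2 + zeta13^3 + zeta13^4 + zeta13^5 + zeta13^6
    + zeta13^7 + zeta13^8 + zeta13^9 + zeta13^10 + zeta13^11 + zeta13^12 = 0 := by
  have hne : zeta13 ≠ 1 := zeta13_prim.ne_one (by norm_num)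
  have h0 : (zeta13 - 1) * (1 + zeta13 + zeta13^2 + zeta13^3 + zeta13^4 + zeta13^5
      + zeta13^6 + zeta13^7 + zeta13^8 + zeta13^9 + zeta13^10 + zeta13^11 + zeta13^12)
      = 0 := by linear_combination zeta13_pow
  exact (mul_eq_zero.mp h0).resolve_left (sub_ne_zero.mpr hne)

set_option maxHeartbeats 2000000 in
lemma Mzeta_sq : Mzeta * Mzeta = (-13 : ℂ) • 1 := by
  have hz := zeta13_pow
  have hΦ := zeta13_sum
  ext i j
  fin_cases i <;> fin_cases j <;>
    simp [Mzeta, Matrix.mul_apply, Fin.sum_univ_six, cons_val_five] <;>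
    first
      | ring1
      | linear_combination (zeta13^9 - zeta13^8 + zeta13^5 - zeta13^4) * hz
      | linear_combination (-zeta13^10 - zeta13^7 + zeta13^6 + zeta13^3) * hz
      | linear_combination (zeta13^10 + zeta13^7 - zeta13^6 - zeta13^3) * hz
      | linear_combination (zeta13^11 + zeta13^9 + zeta13^7 + zeta13^5 + zeta13^3
          + zeta13 - 12) * hz + hΦ

theorem Smat_sq_and_Tmat_pow :
    Smat ^ 2 = -1 ∧ Tmat ^ 13 = 1 := by
  constructor
  · have hS : Smat = (-(1 / (Real.sqrt 13 : ℂ))) • Mzeta := rfl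
    have hs : (Real.sqrt 13 : ℂ) * (Real.sqrt 13 : ℂ) = 13 := by
      rw [← Complex.ofReal_mul, Real.mul_self_sqrt (by norm_num : (0:ℝ) ≤ 13)]
      norm_num
    have hsne : (Real.sqrt 13 : ℂ) ≠ 0 := by
      intro h
      rw [h, mul_zero] at hs
      norm_num at hs
    rw [sq, hS, Matrix.smul_mul, Matrix.mul_smul, smul_smul, Mzeta_sq, smul_smul]
    have hc : -(1 / (Real.sqrt 13 : ℂ)) * -(1 / (Real.sqrt 13 : ℂ)) * (-13) = -1 := by
      rw [show -(1 / (Real.sqrt 13 : ℂ)) * -(1 / (Real.sqrt 13 : ℂ)) * (-13)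
          = -13 / ((Real.sqrt 13 : ℂ) * (Real.sqrt 13 : ℂ)) by ring, hs]
      norm_num
    rw [hc, neg_smul, one_smul]
  · have hz := zeta13_pow
    have hv : (![zeta13^7, zeta13^11, zeta13^8, zeta13^6, zeta13^2, zeta13^5] : Fin 6 → ℂ) ^ 13
        = fun _ => (1 : ℂ) := by
      funext i
      fin_cases i
      · show (zeta13^7)^13 = 1
        rw [show ((zeta13^7)^13 : ℂ) = (zeta13^13)^7 by ring, hz, one_pow]
      · show (zeta13^11)^13 = 1
        rw [show ((zeta13^11)^13 : ℂ) = (zeta13^13)^11 by ring, hz, one_pow]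
      · show (zeta13^8)^13 = 1
        rw [show ((zeta13^8)^13 : ℂ) = (zeta13^13)^8 by ring, hz, one_pow]
      · show (zeta13^6)^13 = 1
        rw [show ((zeta13^6)^13 : ℂ) = (zeta13^13)^6 by ring, hz, one_pow]
      · show (zeta13^2)^13 = 1
        rw [show ((zeta13^2)^13 : ℂ) = (zeta13^13)^2 by ring, hz, one_pow]
      · show (zeta13^5)^13 = 1
        rw [show ((zeta13^5)^13 : ℂ) = (zeta13^13)^5 by ring, hz, one_pow]
    rw [Tmat, Matrix.diagonal_pow, hv, Matrix.diagonal_one]
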